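/- Let κ be a Markov kernel on a Polish space X which is strong Feller. Then for every point u ∈ X there exists an open neighbourhood N of u such that at most one ergodic invariant probability measure of κ has topological support intersecting N. -/

import Mathlib

open MeasureTheory ProbabilityTheory

/-- A Markov kernel is *strong Feller* if it maps bounded Borel measurable functions to
bounded continuous functions. -/
def IsStrongFeller {X : Type*} [TopologicalSpace X] [MeasurableSpace X]
    (κ : Kernel X X) : Prop :=
  ∀ ψ : X → ℝ, Measurable ψ → (∃ C, ∀ x, |ψ x| ≤ C) →
    Continuous fun x => ∫ y, ψ y ∂(κ x)

/-- A measure `μ` is *invariant* for the kernel `κ` if `μ A = ∫ κ(x, A) μ(dx)` for every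
Borel set `A`. -/
def KernelInvariant {X : Type*} [MeasurableSpace X] (κ : Kernel X X) (μ : Measure X) : Prop :=
  ∀ A : Set X, MeasurableSet A → μ A = ∫⁻ x, κ x A ∂μ

/-- An invariant measure `μ` is *ergodic* for `κ` if every Borel set `A` with
`κ(x, A) = 1` for `μ`-almost every `x ∈ A` satisfies `μ A ∈ {0, 1}`. -/
def KernelErgodic {X : Type*} [MeasurableSpace X] (κ : Kernel X X) (μ : Measure X) : Prop :=
  ∀ A : Set X, MeasurableSet A → (∀ᵐ x ∂μ, x ∈ A → κ x A = 1) → μ A = 0 ∨ μ A = 1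

/-- The topological support of a measure: the set of points all of whose open
neighbourhoods have positive measure (the smallest closed set of full measure). -/
def measureSupport {X : Type*} [TopologicalSpace X] [MeasurableSpace X]
    (μ : Measure X) : Set X :=
  {x | ∀ V : Set X, IsOpen V → x ∈ V → 0 < μ V}

/-!
Distinct ergodic invariant measures `μ ≠ ν` are mutually singular: `μ ⊓ ν` is again invariant,
and an invariant measure absolutely continuous with respect to an ergodic one is a multiple of it
(the sublevel sets of its density are invariant). Strong Feller makes `x ↦ κ(x, A)` continuous,
so `κ(x, A) = 0` on `supp μ` whenever `μ(A) = 0`. If the supports of infinitely many distinct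
ergodic measures accumulated at `u`, a set separating two infinite subfamilies would give
`κ(·, S)` the limits `0` and `1` at `u`. Hence the supports of the ergodic measures that miss `u`
stay away from `u`, and on the complement of their closure only measures whose support
contains `u` are seen; two of these coincide by the same separation argument.
-/

open scoped ENNReal Topology
open Filter Set

section Kernel

variable {X : Type*} [MeasurableSpace X] {κ : Kernel X X}

def ergodicInvariantMeasures (κ : Kernel X X) : Set (Measure X) :=
  {μ | IsProbabilityMeasure μ ∧ KernelInvariant κ μ ∧ KernelErgodic κ μ}

lemma kernelInvariant_iff_comp_eq {μ : Measure X} : KernelInvariant κ μ ↔ κ ∘ₘ μ = μ := by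
  refine ⟨fun h => Measure.ext fun A hA => ?_, fun h A hA => ?_⟩
  · rw [Measure.bind_apply hA κ.aemeasurable, ← h A hA]
  · rw [← Measure.bind_apply hA κ.aemeasurable, h]

lemma comp_mono_of_le {μ ν : Measure X} (h : μ ≤ ν) : κ ∘ₘ μ ≤ κ ∘ₘ ν :=
  Measure.le_intro fun A hA _ => by
    simp only [Measure.bind_apply hA κ.aemeasurable]
    exact lintegral_mono' h le_rfl

variable [IsMarkovKernel κ]

lemma setLIntegral_kernel_ne_top (m : Measure X) [IsFiniteMeasure m] (A B : Set X) :
    ∫⁻ x in A, κ x B ∂m ≠ ∞ := ne_top_of_le_ne_top (measure_ne_top m A)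
  ((lintegral_mono fun _ => prob_le_one).trans_eq (setLIntegral_one A))

lemma KernelInvariant.inf {μ ν : Measure X} [IsFiniteMeasure μ] (hμ : KernelInvariant κ μ)
    (hν : KernelInvariant κ ν) : KernelInvariant κ (μ ⊓ ν) := by
  have : IsFiniteMeasure (μ ⊓ ν) := isFiniteMeasure_of_le μ inf_le_left
  rw [kernelInvariant_iff_comp_eq] at hμ hν ⊢
  refine Measure.eq_of_le_of_measure_univ_eq (le_inf ?_ ?_) Measure.comp_apply_univ
  · exact (comp_mono_of_le inf_le_left).trans_eq hμ
  · exact (comp_mono_of_le inf_le_right).trans_eq hν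

lemma KernelInvariant.setLIntegral_compl_eq {m : Measure X} [IsFiniteMeasure m]
    (hm : KernelInvariant κ m) {A : Set X} (hA : MeasurableSet A) :
    ∫⁻ x in A, κ x Aᶜ ∂m = ∫⁻ x in Aᶜ, κ x A ∂m := by
  refine (ENNReal.add_right_inj (setLIntegral_kernel_ne_top (κ := κ) m A A)).1 ?_
  calc ∫⁻ x in A, κ x A ∂m + ∫⁻ x in A, κ x Aᶜ ∂m
      = ∫⁻ x in A, 1 ∂m := by
        rw [← lintegral_add_left (κ.measurable_coe hA)]
        simp only [measure_add_measure_compl hA, measure_univ]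
    _ = m A := setLIntegral_one A
    _ = ∫⁻ x in A, κ x A ∂m + ∫⁻ x in Aᶜ, κ x A ∂m := by
        rw [hm A hA, lintegral_add_compl _ hA]

lemma KernelInvariant.ae_kernel_sublevelSet_eq_one {μ : Measure X} [IsFiniteMeasure μ]
    (hμ : KernelInvariant κ μ) {g : X → ℝ≥0∞} (hg : Measurable g)
    (hgμ : KernelInvariant κ (μ.withDensity g)) [IsFiniteMeasure (μ.withDensity g)]
    {c : ℝ≥0∞} (hc : c ≠ ∞) :
    ∀ᵐ x ∂μ, x ∈ {y | g y < c} → κ x {y | g y < c} = 1 := by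
  set A := {y | g y < c}
  have hA : MeasurableSet A := measurableSet_lt hg measurable_const
  have hκAc : Measurable fun x => κ x Aᶜ := κ.measurable_coe hA.compl
  have hle : (fun x => g x * κ x Aᶜ) ≤ᵐ[μ.restrict A] fun x => c * κ x Aᶜ :=
    (ae_restrict_mem hA).mono fun x hx => mul_le_mul_left (le_of_lt hx) _
  have hfin : ∫⁻ x in A, c * κ x Aᶜ ∂μ ≠ ∞ := by
    rw [lintegral_const_mul c hκAc]
    exact ENNReal.mul_ne_top hc (setLIntegral_kernel_ne_top μ A Aᶜ)
  -- Flux balance between `A` and `Aᶜ` under `μ` and under `μ.withDensity g`; `c ≤ g` off `A`.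
  have hge : ∫⁻ x in A, c * κ x Aᶜ ∂μ ≤ ∫⁻ x in A, g x * κ x Aᶜ ∂μ := calc
    ∫⁻ x in A, c * κ x Aᶜ ∂μ = ∫⁻ x in Aᶜ, c * κ x A ∂μ := by
      rw [lintegral_const_mul c hκAc, lintegral_const_mul c (κ.measurable_coe hA),
        hμ.setLIntegral_compl_eq hA]
    _ ≤ ∫⁻ x in Aᶜ, g x * κ x A ∂μ :=
      lintegral_mono_ae <| (ae_restrict_mem hA.compl).mono fun x hx =>
        mul_le_mul_left (not_lt.1 (show ¬ g x < c from hx)) _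
    _ = ∫⁻ x in Aᶜ, κ x A ∂(μ.withDensity g) :=
      (setLIntegral_withDensity_eq_setLIntegral_mul μ hg (κ.measurable_coe hA) hA.compl).symm
    _ = ∫⁻ x in A, κ x Aᶜ ∂(μ.withDensity g) := (hgμ.setLIntegral_compl_eq hA).symm
    _ = ∫⁻ x in A, g x * κ x Aᶜ ∂μ :=
      setLIntegral_withDensity_eq_setLIntegral_mul μ hg hκAc hA
  have heq := ae_eq_of_ae_le_of_lintegral_le hle (ne_top_of_le_ne_top hfin (lintegral_mono_ae hle))
    (measurable_const.mul hκAc).aemeasurable hge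
  refine (ae_restrict_iff' hA).1 ?_
  filter_upwards [ae_restrict_mem hA, heq] with x hxA hx
  have hκx : κ x Aᶜ = 0 := by
    by_contra hne
    exact hxA.ne ((ENNReal.mul_left_inj hne (measure_ne_top _ _)).1 hx)
  exact (prob_compl_eq_zero_iff hA).1 hκx

lemma KernelErgodic.eq_smul_of_absolutelyContinuous {μ ρ : Measure X} [IsProbabilityMeasure μ]
    [IsFiniteMeasure ρ] (hμ : KernelInvariant κ μ) (hμe : KernelErgodic κ μ)
    (hρ : KernelInvariant κ ρ) (hρμ : ρ ≪ μ) : ρ = ρ univ • μ := by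
  set g := ρ.rnDeriv μ
  have hg : Measurable g := Measure.measurable_rnDeriv ρ μ
  have hgμ : μ.withDensity g = ρ := Measure.withDensity_rnDeriv_eq ρ μ hρμ
  have hsep : ∀ U ∈ range (Iio : ℝ≥0∞ → Set ℝ≥0∞),
      (∀ᵐ x ∂μ, g x ∈ U) ∨ ∀ᵐ x ∂μ, g x ∉ U := by
    rintro _ ⟨c, rfl⟩
    rcases eq_or_ne c ∞ with rfl | hc
    · exact Or.inl (Measure.rnDeriv_lt_top ρ μ)
    have hA : MeasurableSet {y | g y < c} := measurableSet_lt hg measurable_const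
    have : IsFiniteMeasure (μ.withDensity g) := hgμ ▸ inferInstance
    rcases hμe _ hA (hμ.ae_kernel_sublevelSet_eq_one hg (hgμ ▸ hρ) hc) with h | h
    · exact Or.inr (measure_eq_zero_iff_ae_notMem.1 h)
    · exact Or.inl (mem_ae_iff.2 ((prob_compl_eq_zero_iff hA).2 h))
  obtain ⟨a, ha⟩ := exists_eventuallyEq_const_of_forall_separating _ hsep
  have hρa : ρ = a • μ := by rw [← hgμ, withDensity_congr_ae ha]; exact withDensity_const a
  rw [hρa]
  simp

theorem pairwise_mutuallySingular_ergodicInvariantMeasures :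
    (ergodicInvariantMeasures κ).Pairwise (· ⟂ₘ ·) := by
  intro μ hμ ν hν hne
  obtain ⟨hμp, hμi, hμe⟩ := hμ
  obtain ⟨hνp, hνi, hνe⟩ := hν
  have : IsFiniteMeasure (μ ⊓ ν) := isFiniteMeasure_of_le μ inf_le_left
  have hinv := hμi.inf hνi
  have hμ' := hμe.eq_smul_of_absolutelyContinuous hμi hinv
    (Measure.absolutelyContinuous_of_le inf_le_left)
  have hν' := hνe.eq_smul_of_absolutelyContinuous hνi hinv
    (Measure.absolutelyContinuous_of_le inf_le_right)
  by_cases h0 : (μ ⊓ ν) univ = 0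
  · exact Measure.mutuallySingular_of_disjoint (disjoint_iff.2 (Measure.measure_univ_eq_zero.1 h0))
  · refine absurd (Measure.ext fun A _ => ?_) hne
    have hA := congrArg (· A) (hμ'.symm.trans hν')
    simp only [Measure.smul_apply, smul_eq_mul] at hA
    exact (ENNReal.mul_right_inj h0 (measure_ne_top _ _)).1 hA

end Kernel

section StrongFeller

variable {X : Type*} [TopologicalSpace X] [MeasurableSpace X] {κ : Kernel X X}

lemma measureSupport_eq_support (μ : Measure X) : measureSupport μ = μ.support := by
  rw [Measure.support_eq_forall_isOpen]
  ext x
  exact forall_congr' fun _ => forall_comm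

lemma IsStrongFeller.continuous_measureReal (hSF : IsStrongFeller κ) {A : Set X}
    (hA : MeasurableSet A) : Continuous fun x => (κ x).real A := by
  have hbdd : ∃ C, ∀ x, |A.indicator (1 : X → ℝ) x| ≤ C :=
    ⟨1, fun x => by by_cases hx : x ∈ A <;> simp [hx]⟩
  simpa only [integral_indicator_one hA] using hSF _ (measurable_one.indicator hA) hbdd

lemma IsStrongFeller.apply_eq_zero_of_mem_support [IsFiniteKernel κ] (hSF : IsStrongFeller κ)
    {μ : Measure X} (hμ : KernelInvariant κ μ) {A : Set X} (hA : MeasurableSet A)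
    (hμA : μ A = 0) {x : X} (hx : x ∈ μ.support) : κ x A = 0 := by
  have hae : μ {y | κ y A ≠ 0} = 0 := ae_iff.1 <|
    (lintegral_eq_zero_iff (κ.measurable_coe hA)).1 ((hμ A hA).symm.trans hμA)
  have hopen : IsOpen {y | (κ y).real A ≠ 0} :=
    isOpen_ne_fun (hSF.continuous_measureReal hA) continuous_const
  have hnull : μ {y | (κ y).real A ≠ 0} = 0 := by
    refine measure_mono_null (fun y (hy : (κ y).real A ≠ 0) (h0 : κ y A = 0) => hy ?_) hae
    rw [measureReal_def, h0, ENNReal.toReal_zero]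
  by_contra hne
  exact Measure.subset_compl_support_of_isOpen hopen hnull
    ((measureReal_eq_zero_iff (measure_ne_top _ _)).not.2 hne) hx

variable [IsMarkovKernel κ]

theorem IsStrongFeller.not_forall_mutuallySingular (hSF : IsStrongFeller κ) {ι : Type*}
    [Countable ι] {l : Filter ι} [l.NeBot] {α β : ι → Measure X}
    (hα : ∀ i, KernelInvariant κ (α i)) (hβ : ∀ i, KernelInvariant κ (β i)) {a b : ι → X}
    {u : X} (ha : ∀ i, a i ∈ (α i).support) (hb : ∀ i, b i ∈ (β i).support)
    (hau : Tendsto a l (𝓝 u)) (hbu : Tendsto b l (𝓝 u)) : ¬ ∀ i j, α i ⟂ₘ β j := by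
  intro h
  have hsum : Measure.sum α ⟂ₘ Measure.sum β :=
    Measure.MutuallySingular.sum_left.2 fun i => Measure.MutuallySingular.sum_right.2 (h i)
  set S := hsum.nullSet
  have hS : MeasurableSet S := hsum.measurableSet_nullSet
  have haS : ∀ i, (κ (a i)).real S = 0 := fun i => by
    rw [measureReal_def, hSF.apply_eq_zero_of_mem_support (hα i) hS
      (Measure.sum_apply_eq_zero.1 hsum.measure_nullSet i) (ha i), ENNReal.toReal_zero]
  have hbS : ∀ i, (κ (b i)).real S = 1 := fun i => by
    have hSc := hSF.apply_eq_zero_of_mem_support (hβ i) hS.compl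
      (Measure.sum_apply_eq_zero.1 hsum.measure_compl_nullSet i) (hb i)
    rw [measureReal_def, (prob_compl_eq_zero_iff hS).1 hSc, ENNReal.toReal_one]
  have hcont := (hSF.continuous_measureReal hS).tendsto u
  have h0 : (κ u).real S = 0 := tendsto_nhds_unique (hcont.comp hau) <| by
    simp only [Function.comp_def, haS]
    exact tendsto_const_nhds
  have h1 : (κ u).real S = 1 := tendsto_nhds_unique (hcont.comp hbu) <| by
    simp only [Function.comp_def, hbS]
    exact tendsto_const_nhds
  exact zero_ne_one (h0.symm.trans h1)

theorem IsStrongFeller.eq_of_mem_support (hSF : IsStrongFeller κ) {μ ν : Measure X}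
    (hμ : μ ∈ ergodicInvariantMeasures κ) (hν : ν ∈ ergodicInvariantMeasures κ) {u : X}
    (huμ : u ∈ μ.support) (huν : u ∈ ν.support) : μ = ν := by
  by_contra hne
  exact hSF.not_forall_mutuallySingular (l := (⊤ : Filter Unit)) (α := fun _ => μ)
    (β := fun _ => ν) (fun _ => hμ.2.1) (fun _ => hν.2.1) (fun _ => huμ) (fun _ => huν)
    tendsto_const_nhds tendsto_const_nhds
    fun _ _ => pairwise_mutuallySingular_ergodicInvariantMeasures hμ hν hne

theorem IsStrongFeller.finite_range_of_tendsto (hSF : IsStrongFeller κ) {ρ : ℕ → Measure X}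
    (hρ : ∀ n, ρ n ∈ ergodicInvariantMeasures κ) {y : ℕ → X} (hy : ∀ n, y n ∈ (ρ n).support)
    {u : X} (hyu : Tendsto y atTop (𝓝 u)) : (range ρ).Finite := by
  by_contra hinf
  -- Enumerate the infinite range injectively and split it into even and odd terms.
  set e := Set.Infinite.natEmbedding _ hinf
  choose n hn using fun k => (e k).2
  have hρn : Function.Injective (ρ ∘ n) := fun k k' h =>
    e.injective (Subtype.ext ((hn k).symm.trans (h.trans (hn k'))))
  have hyn {f : ℕ → ℕ} (hf : Function.Injective f) : Tendsto (fun k => y (n (f k))) atTop (𝓝 u) :=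
    hyu.comp (hρn.of_comp.comp hf).nat_tendsto_atTop
  exact hSF.not_forall_mutuallySingular (α := fun k => ρ (n (2 * k)))
    (β := fun k => ρ (n (2 * k + 1))) (fun _ => (hρ _).2.1) (fun _ => (hρ _).2.1)
    (fun _ => hy _) (fun _ => hy _) (hyn fun _ _ h => by omega) (hyn fun _ _ h => by omega)
    fun _ _ => pairwise_mutuallySingular_ergodicInvariantMeasures (hρ _) (hρ _)
      (hρn.ne (by omega))

theorem IsStrongFeller.notMem_closure_iUnion_support [FrechetUrysohnSpace X]
    (hSF : IsStrongFeller κ) (u : X) :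
    u ∉ closure (⋃ μ ∈ {μ ∈ ergodicInvariantMeasures κ | u ∉ μ.support}, μ.support) := by
  intro hu
  obtain ⟨y, hyS, hyu⟩ := mem_closure_iff_seq_limit.1 hu
  simp only [mem_iUnion, exists_prop] at hyS
  choose ρ hρ hyρ using hyS
  have hclosed : IsClosed (⋃ μ ∈ range ρ, μ.support) :=
    (hSF.finite_range_of_tendsto (fun n => (hρ n).1) hyρ hyu).isClosed_biUnion
      fun _ _ => Measure.isClosed_support
  obtain ⟨_, ⟨n, rfl⟩, hun⟩ := mem_iUnion₂.1 <| hclosed.mem_of_tendsto hyu <|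
    Eventually.of_forall fun n => mem_biUnion (mem_range_self n) (hyρ n)
  exact (hρ n).2 hun

end StrongFeller

theorem exists_nhd_unique_ergodic_support_general
    {X : Type*} [TopologicalSpace X] [PolishSpace X] [MeasurableSpace X]
    (κ : Kernel X X) [IsMarkovKernel κ] (hSF : IsStrongFeller κ) (u : X) :
    ∃ N : Set X, IsOpen N ∧ u ∈ N ∧
      ∀ μ ν : Measure X, IsProbabilityMeasure μ → IsProbabilityMeasure ν →
        KernelInvariant κ μ → KernelErgodic κ μ →
        KernelInvariant κ ν → KernelErgodic κ ν →
        (measureSupport μ ∩ N).Nonempty → (measureSupport ν ∩ N).Nonempty →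
        μ = ν := by
  set F := closure (⋃ μ ∈ {μ ∈ ergodicInvariantMeasures κ | u ∉ μ.support}, μ.support)
  have hsupp {μ : Measure X} (hμ : μ ∈ ergodicInvariantMeasures κ)
      (hN : (measureSupport μ ∩ Fᶜ).Nonempty) : u ∈ μ.support := by
    obtain ⟨x, hxμ, hxF⟩ := hN
    rw [measureSupport_eq_support] at hxμ
    by_contra hu
    exact hxF (subset_closure (mem_biUnion ⟨hμ, hu⟩ hxμ))
  refine ⟨Fᶜ, isClosed_closure.isOpen_compl, hSF.notMem_closure_iUnion_support u, ?_⟩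
  intro μ ν hμp hνp hμi hμe hνi hνe hμN hνN
  exact hSF.eq_of_mem_support ⟨hμp, hμi, hμe⟩ ⟨hνp, hνi, hνe⟩
    (hsupp ⟨hμp, hμi, hμe⟩ hμN) (hsupp ⟨hνp, hνi, hνe⟩ hνN)

/-- For a strong Feller Markov kernel on a Polish space, every point has
an open neighbourhood met by the support of at most one ergodic invariant probability
measure. -/
theorem exists_nhd_unique_ergodic_support
    {X : Type*} [TopologicalSpace X] [PolishSpace X] [MeasurableSpace X] [BorelSpace X]
    (κ : Kernel X X) [IsMarkovKernel κ] (hSF : IsStrongFeller κ) (u : X) :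
    ∃ N : Set X, IsOpen N ∧ u ∈ N ∧
      ∀ μ ν : Measure X, IsProbabilityMeasure μ → IsProbabilityMeasure ν →
        KernelInvariant κ μ → KernelErgodic κ μ →
        KernelInvariant κ ν → KernelErgodic κ ν →
        (measureSupport μ ∩ N).Nonempty → (measureSupport ν ∩ N).Nonempty →
        μ = ν :=
  exists_nhd_unique_ergodic_support_general κ hSF u
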